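/- For n odd, let R_0 be the constant sequence with all n entries equal to (n-1)/2. Then R_0 is a feasible score sequence, and its normalized score vector is the symmetric vector (p, p-1, ..., 1, 0, -1, ..., -p) with p = (n-1)/2; consequently there is a unique tournament with score sequence R_0 achieving the minimum number of upsets. -/

import Mathlib

/-- `r` is a feasible score sequence of length `n`: nondecreasing, total sum
`n(n-1)/2`, and satisfying the Landau inequalities. -/
def IsFeasible (n : ℕ) (r : Fin n → ℤ) : Prop :=
  Monotone r ∧ (∑ i, r i) = (n.choose 2 : ℤ) ∧
    ∀ k : ℕ, k ≤ n →
      (k.choose 2 : ℤ) ≤ ∑ i ∈ Finset.univ.filter (fun i : Fin n => (i : ℕ) < k), r i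

/-- `A` is (the adjacency matrix of) a tournament on `n` vertices. -/
def IsTournament {n : ℕ} (A : Fin n → Fin n → ℤ) : Prop :=
  (∀ i, A i i = 0) ∧
    ∀ i j, i ≠ j → (A i j = 1 ∧ A j i = 0) ∨ (A i j = 0 ∧ A j i = 1)

/-- The number of upsets of a tournament: entries `a_{ij} = 1` with `i < j`. -/
def upsets {n : ℕ} (A : Fin n → Fin n → ℤ) : ℕ :=
  (Finset.univ.filter (fun p : Fin n × Fin n => p.1 < p.2 ∧ A p.1 p.2 = 1)).card

/-- There is exactly one tournament matrix with score sequence `r` attaining the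
minimum number of upsets, i.e. `|U_min(R)| = 1`. -/
def UminUnique {n : ℕ} (r : Fin n → ℤ) : Prop :=
  ∃! A : Fin n → Fin n → ℤ,
    IsTournament A ∧ (∀ i, (∑ j, A i j) = r i) ∧
      ∀ B : Fin n → Fin n → ℤ, IsTournament B → (∀ i, (∑ j, B i j) = r i) →
        upsets A ≤ upsets B

/-- The symmetric block `(p, p-1, ..., 1, 0^t, -1, -2, ..., -p)`. -/
def symBlock (p t : ℕ) : List ℤ :=
  ((List.range p).map (fun s => (p : ℤ) - s)) ++ List.replicate t 0 ++
    (List.range p).map (fun s => -((s : ℤ) + 1))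

/-- A symmetric vector: either all zeros, or `(p, ..., 1, 0^t, -1, ..., -p)`
for some positive `p`. -/
def IsSymBlock (B : List ℤ) : Prop :=
  (∃ t, B = List.replicate t 0) ∨ ∃ p t, 0 < p ∧ B = symBlock p t

/-- `H` is a concatenation of symmetric vectors. -/
def IsConcatSym (H : List ℤ) : Prop :=
  ∃ L : List (List ℤ), H = L.flatten ∧ ∀ B ∈ L, IsSymBlock B

/-- The normalized score vector `h_i = r_i - (i-1)` of `r`, as a list. -/
def normalized (n : ℕ) (r : Fin n → ℤ) : List ℤ :=
  List.ofFn (fun i : Fin n => r i - (i : ℕ))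

/-! Write `n = 2p + 1`. For a tournament `(a_ij)` in which every vertex has score `p`, row and
column sums agree, so `∑_{i,j} (i - j) a_ij = 0`. Pairing `(i, j)` with `(j, i)` turns this into
`n · upsets = ∑_{i<j} (j - i) + ∑_{i<j} (n - 2(j - i)) a_ij`. Each term of the last sum is
minimized by `a_ij = 1` exactly when `j - i > p`, which is the rotational tournament in which every
vertex beats the `p` vertices cyclically preceding it; as `n` is odd, no weight `n - 2(j - i)`
vanishes, so this minimizer is unique. -/

open Finset

def upperPairs (ι : Type*) [Fintype ι] [LinearOrder ι] : Finset (ι × ι) :=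
  univ.filter fun q => q.1 < q.2

theorem sum_sum_eq_sum_upperPairs_add_swap {ι M : Type*} [Fintype ι] [LinearOrder ι]
    [AddCommMonoid M] (f : ι → ι → M) (hf : ∀ i, f i i = 0) :
    ∑ i, ∑ j, f i j = ∑ q ∈ upperPairs ι, (f q.1 q.2 + f q.2 q.1) := by
  rw [upperPairs, sum_filter, Fintype.sum_prod_type]
  simp only [ite_add_zero, sum_add_distrib]
  rw [sum_comm (f := fun i j => if i < j then f j i else 0), ← sum_add_distrib]
  refine sum_congr rfl fun i _ => ?_
  rw [← sum_add_distrib]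
  refine sum_congr rfl fun j _ => ?_
  rcases lt_trichotomy i j with h | rfl | h
  · simp [h, h.not_gt]
  · simp [hf]
  · simp [h, h.not_gt]

def weightedUpsets {n : ℕ} (B : Fin n → Fin n → ℤ) : ℤ :=
  ∑ q ∈ upperPairs (Fin n), ((n : ℤ) - 2 * (((q.2 : ℕ) : ℤ) - (q.1 : ℕ))) * B q.1 q.2

namespace IsTournament
variable {n : ℕ} {A B : Fin n → Fin n → ℤ}

theorem eq_zero_or_eq_one (hB : IsTournament B) (i j : Fin n) : B i j = 0 ∨ B i j = 1 := by
  rcases eq_or_ne i j with rfl | h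
  · exact .inl (hB.1 i)
  · rcases hB.2 i j h with ⟨h1, -⟩ | ⟨h0, -⟩
    exacts [.inr h1, .inl h0]

theorem add_swap (hB : IsTournament B) {i j : Fin n} (h : i ≠ j) : B i j + B j i = 1 := by
  rcases hB.2 i j h with ⟨h1, h2⟩ | ⟨h1, h2⟩ <;> rw [h1, h2] <;> norm_num

theorem eq_of_forall_lt (hA : IsTournament A) (hB : IsTournament B)
    (h : ∀ i j, i < j → A i j = B i j) : A = B := by
  funext i j
  rcases lt_trichotomy i j with hij | rfl | hij
  · exact h i j hij
  · rw [hA.1, hB.1]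
  · linear_combination hA.add_swap hij.ne' - hB.add_swap hij.ne' - h j i hij

theorem sum_col (hB : IsTournament B) (j : Fin n) :
    ∑ i, B i j = (n - 1 : ℤ) - ∑ i, B j i := by
  have : ∑ i, (B i j + B j i) = ∑ i, if i = j then 0 else 1 :=
    sum_congr rfl fun i _ => by
      split_ifs with h
      · subst h; simp [hB.1]
      · exact hB.add_swap h
  rw [sum_add_distrib, sum_ite, sum_const_zero, zero_add, sum_const, filter_ne',
    card_erase_of_mem (mem_univ j), card_univ, Fintype.card_fin] at this
  rcases n with _ | n
  · exact j.elim0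
  · simp only [add_tsub_cancel_right, Int.nsmul_eq_mul, mul_one] at this
    push_cast
    linarith

theorem upsets_eq_sum (hB : IsTournament B) :
    (upsets B : ℤ) = ∑ q ∈ upperPairs (Fin n), B q.1 q.2 := by
  rw [upsets, ← filter_filter, card_filter, Nat.cast_sum, upperPairs]
  refine sum_congr rfl fun q _ => ?_
  rcases hB.eq_zero_or_eq_one q.1 q.2 with h | h <;> simp [h]

theorem sum_sum_sub_mul_eq_zero (hB : IsTournament B) (hs : ∀ i, 2 * ∑ j, B i j = n - 1) :
    ∑ i : Fin n, ∑ j : Fin n, (((i : ℕ) : ℤ) - (j : ℕ)) * B i j = 0 := by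
  simp only [sub_mul, sum_sub_distrib, ← mul_sum]
  rw [sum_comm]
  simp only [← mul_sum, hB.sum_col, ← sum_sub_distrib]
  refine sum_eq_zero fun i _ => ?_
  linear_combination ((i : ℕ) : ℤ) * hs i

theorem mul_upsets_eq (hB : IsTournament B) (hs : ∀ i, 2 * ∑ j, B i j = n - 1) :
    (n : ℤ) * upsets B = ∑ q ∈ upperPairs (Fin n), (((q.2 : ℕ) : ℤ) - (q.1 : ℕ)) +
      weightedUpsets B := by
  have h := hB.sum_sum_sub_mul_eq_zero hs
  rw [sum_sum_eq_sum_upperPairs_add_swap _ (by simp)] at h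
  rw [hB.upsets_eq_sum, weightedUpsets, mul_sum, ← sum_add_distrib, eq_comm, ← sub_eq_zero,
    ← sum_sub_distrib, ← h]
  refine sum_congr rfl fun q hq => ?_
  linear_combination (((q.1 : ℕ) : ℤ) - (q.2 : ℕ)) * hB.add_swap (mem_filter.1 hq).2.ne

theorem upsets_le_iff [NeZero n] (hA : IsTournament A) (hsA : ∀ i, 2 * ∑ j, A i j = n - 1)
    (hB : IsTournament B) (hsB : ∀ i, 2 * ∑ j, B i j = n - 1) :
    upsets A ≤ upsets B ↔ weightedUpsets A ≤ weightedUpsets B := by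
  have hn : (0 : ℤ) < n := by exact_mod_cast Nat.pos_of_neZero n
  rw [← Nat.cast_le (α := ℤ), ← mul_le_mul_iff_right₀ hn, hA.mul_upsets_eq hsA,
    hB.mul_upsets_eq hsB, add_le_add_iff_left]

end IsTournament

theorem mul_ite_neg_le {w x : ℤ} (hx : x = 0 ∨ x = 1) : w * (if w < 0 then 1 else 0) ≤ w * x := by
  split_ifs <;> rcases hx with rfl | rfl <;> omega

theorem eq_ite_neg_of_mul_eq {w x : ℤ} (hw : w ≠ 0) (hx : x = 0 ∨ x = 1)
    (h : w * (if w < 0 then 1 else 0) = w * x) : x = if w < 0 then 1 else 0 := by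
  split_ifs at h ⊢ <;> rcases hx with rfl | rfl <;> omega

section Rotational
variable {p : ℕ} {B : Fin (2 * p + 1) → Fin (2 * p + 1) → ℤ}

/-- Vertex `i` beats `j` iff `i - j ≡ 1, …, p (mod 2p + 1)`. -/
def rotational (p : ℕ) (i j : Fin (2 * p + 1)) : ℤ :=
  if ((j : ℕ) < i ∧ (i : ℕ) ≤ j + p) ∨ (i : ℕ) + p < j then 1 else 0

theorem isTournament_rotational : IsTournament (rotational p) := by
  refine ⟨fun i => by simp [rotational], fun i j hij => ?_⟩
  have hv : (i : ℕ) ≠ j := Fin.val_ne_of_ne hij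
  have := i.isLt
  have := j.isLt
  unfold rotational
  split_ifs <;> norm_num <;> omega

theorem sum_rotational (i : Fin (2 * p + 1)) : ∑ j, rotational p i j = p := by
  have hbeaten : (range (2 * p + 1)).filter (fun j : ℕ => (j < i ∧ (i : ℕ) ≤ j + p) ∨ i + p < j) =
      Ico (i - p) i ∪ Ico (i + p + 1) (2 * p + 1) := by
    ext j
    simp only [mem_filter, mem_range, mem_union, mem_Ico]
    omega
  have hdisj : Disjoint (Ico (i - p) (i : ℕ)) (Ico (i + p + 1) (2 * p + 1)) :=
    disjoint_left.2 fun j hj hj' => by simp only [mem_Ico] at hj hj'; omega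
  simp only [rotational]
  rw [Fin.sum_univ_eq_sum_range (fun j => if (j < i ∧ (i : ℕ) ≤ j + p) ∨ i + p < j then (1 : ℤ) else 0),
    sum_boole, hbeaten, card_union_of_disjoint hdisj, Nat.card_Ico, Nat.card_Ico]
  have := i.isLt
  push_cast
  omega

theorem rotational_eq_ite_weight_neg {i j : Fin (2 * p + 1)} (h : i < j) :
    rotational p i j =
      if (((2 * p + 1 : ℕ) : ℤ) - 2 * (((j : ℕ) : ℤ) - (i : ℕ))) < 0 then 1 else 0 := by
  have hji : ¬ (j : ℕ) < i := not_lt.2 h.le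
  simp only [rotational, hji, false_and, false_or]
  congr 1
  apply propext
  push_cast
  omega

theorem IsTournament.weightedUpsets_rotational_le (hB : IsTournament B) :
    weightedUpsets (rotational p) ≤ weightedUpsets B :=
  sum_le_sum fun q hq => by
    rw [rotational_eq_ite_weight_neg (mem_filter.1 hq).2]
    exact mul_ite_neg_le (hB.eq_zero_or_eq_one _ _)

theorem IsTournament.eq_rotational_of_weightedUpsets_le (hB : IsTournament B)
    (h : weightedUpsets B ≤ weightedUpsets (rotational p)) : B = rotational p := by
  have hterm := (sum_eq_sum_iff_of_le fun q hq => by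
    rw [rotational_eq_ite_weight_neg (mem_filter.1 hq).2]
    exact mul_ite_neg_le (hB.eq_zero_or_eq_one _ _)).1
      (le_antisymm hB.weightedUpsets_rotational_le h)
  refine hB.eq_of_forall_lt isTournament_rotational fun i j hij => ?_
  have := hterm (i, j) (by simp [upperPairs, hij])
  rw [rotational_eq_ite_weight_neg hij] at this ⊢
  exact eq_ite_neg_of_mul_eq (by omega) (hB.eq_zero_or_eq_one i j) this

theorem two_mul_sum_eq_of_sum_eq (hs : ∀ i, ∑ j, B i j = p) (i : Fin (2 * p + 1)) :
    2 * ∑ j, B i j = ((2 * p + 1 : ℕ) : ℤ) - 1 := by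
  rw [hs]; push_cast; ring

theorem uminUnique_const (p : ℕ) : UminUnique (fun _ : Fin (2 * p + 1) => (p : ℤ)) := by
  have hR := two_mul_sum_eq_of_sum_eq (sum_rotational (p := p))
  refine ⟨rotational p, ⟨isTournament_rotational, sum_rotational, fun B hB hs => ?_⟩, ?_⟩
  · exact (isTournament_rotational.upsets_le_iff hR hB (two_mul_sum_eq_of_sum_eq hs)).2
      hB.weightedUpsets_rotational_le
  · rintro B ⟨hB, hs, hmin⟩
    exact hB.eq_rotational_of_weightedUpsets_le
      ((hB.upsets_le_iff (two_mul_sum_eq_of_sum_eq hs) isTournament_rotational hR).1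
        (hmin _ isTournament_rotational sum_rotational))

end Rotational

theorem choose_two_two_mul_add_one (p : ℕ) : (2 * p + 1).choose 2 = (2 * p + 1) * p := by
  rw [Nat.choose_two_right]
  simp [mul_comm 2 p, ← mul_assoc]

theorem choose_two_le_mul {k p : ℕ} (hk : k ≤ 2 * p + 1) : k.choose 2 ≤ k * p := by
  rw [Nat.choose_two_right]
  refine Nat.div_le_of_le_mul ?_
  calc k * (k - 1) ≤ k * (2 * p) := Nat.mul_le_mul_left k (by omega)
    _ = 2 * (k * p) := by ring

theorem isFeasible_const (p : ℕ) : IsFeasible (2 * p + 1) (fun _ => (p : ℤ)) := by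
  refine ⟨monotone_const, ?_, fun k hk => ?_⟩
  · rw [sum_const, card_univ, Fintype.card_fin, choose_two_two_mul_add_one, nsmul_eq_mul]
    push_cast; ring
  · rw [sum_const, Fin.card_filter_val_lt, min_eq_right hk, nsmul_eq_mul]
    exact_mod_cast choose_two_le_mul hk

theorem normalized_const (p : ℕ) : normalized (2 * p + 1) (fun _ => (p : ℤ)) = symBlock p 1 := by
  calc normalized (2 * p + 1) (fun _ => (p : ℤ))
      = (List.range (p + 1 + p)).map (fun s : ℕ => (p : ℤ) - s) := by
        rw [normalized, List.ofFn_eq_map, show 2 * p + 1 = p + 1 + p by ring,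
          ← List.map_coe_finRange_eq_range, List.map_map]
        rfl
    _ = symBlock p 1 := by
        -- `symBlock` lifts `List.range p` to `List ℤ` through the list monad, hence `bind_pure_comp`.
        rw [List.range_add, List.range_succ]
        simp only [symBlock, bind_pure_comp, List.map_eq_map, List.map_append, List.map_map,
          List.map_cons, List.map_nil, List.replicate_one]
        congr 2
        · simp only [sub_self]
        · funext s
          simp only [Function.comp_apply]
          push_cast
          ring

/-- For odd `n = 2p+1`, the regular score sequence `((n-1)/2, ..., (n-1)/2)` is
feasible, its normalized score vector is the symmetric vector
`(p, p-1, ..., 1, 0, -1, ..., -p)`, and it has a unique minimum-upset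
tournament. -/
theorem regular_unique (p : ℕ) :
    IsFeasible (2 * p + 1) (fun _ : Fin (2 * p + 1) => (p : ℤ)) ∧
      normalized (2 * p + 1) (fun _ => (p : ℤ)) = symBlock p 1 ∧
      UminUnique (fun _ : Fin (2 * p + 1) => (p : ℤ)) :=
  ⟨isFeasible_const p, normalized_const p, uminUnique_const p⟩
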